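/- Let $E\subset\mathbb{R}^d$ be a Borel set with $\mathcal{L}(E)>0$ and $0<s<d$. For every $\varepsilon>0$ there exists $\delta>0$ such that for every Borel set $F\subset\mathbb{R}^d$ with $\mathcal{L}(E\setminus F) < \delta$, one has $\Gamma_s(F) \le \Gamma_s(E) + \varepsilon$. -/

import Mathlib

open MeasureTheory Filter Set
open scoped ENNReal NNReal

/-- The `s`-energy of a measure: `∬ |x-y|^{-s} dμ dμ`. -/
noncomputable def energy {X : Type*} [EMetricSpace X] [MeasurableSpace X] (s : ℝ)
    (μ : Measure X) : ℝ≥0∞ :=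
  ∫⁻ x, ∫⁻ y, edist x y ^ (-s) ∂μ ∂μ

/-- `μ ∈ 𝒫₀(E)`: `μ` is a Borel probability measure which is a finite positive
combination of restrictions of Lebesgue measure to Borel subsets of `E`. -/
def IsRegComb {d : ℕ} (E : Set (EuclideanSpace ℝ (Fin d)))
    (μ : Measure (EuclideanSpace ℝ (Fin d))) : Prop :=
  IsProbabilityMeasure μ ∧
    ∃ (k : ℕ) (c : Fin k → ℝ≥0∞) (F : Fin k → Set (EuclideanSpace ℝ (Fin d))),
      (∀ i, 0 < c i) ∧ (∀ i, MeasurableSet (F i)) ∧ (∀ i, F i ⊆ E) ∧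
      μ = ∑ i, c i • volume.restrict (F i)

open Classical in
/-- The minimal regular `s`-energy `Γ_s(E)` of a set `E ⊆ ℝ^d`. -/
noncomputable def minRegEnergy {d : ℕ} (s : ℝ) (E : Set (EuclideanSpace ℝ (Fin d))) : ℝ≥0∞ :=
  if 0 < volume E then
    ⨅ (μ : Measure (EuclideanSpace ℝ (Fin d))) (_ : IsRegComb E μ), energy s μ
  else ⊤

/-!
Take `μ ∈ 𝒫₀(E)` with `I_s(μ) < Γ_s(E) + ε`. As a finite combination of restrictions of
Lebesgue measure, `μ ≤ C • 𝓛|_E` with `C < ∞`, so `μ(F) ≥ 1 - C 𝓛(E \ F)`. The normalized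
restriction `μ|_F / μ(F)` lies in `𝒫₀(F)` and has energy at most `I_s(μ) / μ(F)²`, which stays
below `Γ_s(E) + ε` once `μ(F)` is close enough to `1`.
-/

open Topology

lemma energy_mono {X : Type*} [EMetricSpace X] [MeasurableSpace X] (s : ℝ) {μ ν : Measure X}
    (h : μ ≤ ν) : energy s μ ≤ energy s ν :=
  lintegral_mono' h fun _ => lintegral_mono' h le_rfl

lemma energy_smul {X : Type*} [EMetricSpace X] [MeasurableSpace X] (s : ℝ) {c : ℝ≥0∞}
    (hc : c ≠ ⊤) (μ : Measure X) : energy s (c • μ) = c * c * energy s μ := by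
  simp only [energy, lintegral_smul_measure, smul_eq_mul]
  rw [lintegral_const_mul' _ _ hc, mul_assoc]

lemma energy_smul_restrict_le {X : Type*} [EMetricSpace X] [MeasurableSpace X] (s : ℝ)
    {c : ℝ≥0∞} (hc : c ≠ ⊤) (μ : Measure X) (F : Set X) :
    energy s (c • μ.restrict F) ≤ c * c * energy s μ := by
  rw [energy_smul s hc]
  gcongr
  exact energy_mono s Measure.restrict_le_self

lemma one_sub_mul_measure_compl_le {Ω : Type*} [MeasurableSpace Ω] {μ ν : Measure Ω}
    [IsProbabilityMeasure μ] {C : ℝ≥0∞} (h : μ ≤ C • ν) {F : Set Ω} (hF : MeasurableSet F) :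
    1 - C * ν Fᶜ ≤ μ F := by
  have hμF : μ F = 1 - μ Fᶜ := by simpa using prob_compl_eq_one_sub (μ := μ) hF.compl
  exact hμF ▸ tsub_le_tsub_left (h Fᶜ) 1

lemma ENNReal.exists_mem_Ioo_inv_mul_inv_mul_lt {r R : ℝ≥0∞} (h : r < R) :
    ∃ θ ∈ Ioo (0 : ℝ≥0∞) 1, θ⁻¹ * θ⁻¹ * r < R := by
  have : (𝓝[<] (1 : ℝ≥0∞)).NeBot := nhdsLT_neBot_of_exists_lt ⟨0, zero_lt_one⟩
  have hlim : Tendsto (fun θ : ℝ≥0∞ => θ⁻¹ * θ⁻¹ * r) (𝓝[<] 1) (𝓝 r) := by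
    have hinv : Tendsto (fun θ : ℝ≥0∞ => θ⁻¹) (𝓝[<] 1) (𝓝 1) := by
      simpa using (continuous_inv.tendsto (1 : ℝ≥0∞)).mono_left nhdsWithin_le_nhds
    have hsq := ENNReal.Tendsto.mul hinv (Or.inl one_ne_zero) hinv (Or.inl one_ne_zero)
    simpa using ENNReal.Tendsto.mul_const hsq (Or.inl (mul_ne_zero one_ne_zero one_ne_zero))
  exact ((hlim.eventually (gt_mem_nhds h)).and (Ioo_mem_nhdsLT zero_lt_one)).exists.imp
    fun θ hθ => ⟨hθ.2, hθ.1⟩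

variable {d : ℕ} {E F : Set (EuclideanSpace ℝ (Fin d))} {μ : Measure (EuclideanSpace ℝ (Fin d))}

lemma IsRegComb.volume_pos (hμ : IsRegComb E μ) : 0 < volume E := by
  obtain ⟨hprob, k, c, G, -, -, hGE, rfl⟩ := hμ
  refine pos_iff_ne_zero.mpr fun hE => @IsProbabilityMeasure.ne_zero _ _ _ hprob ?_
  exact Finset.sum_eq_zero fun i _ => by
    rw [Measure.restrict_eq_zero.mpr (measure_mono_null (hGE i) hE), smul_zero]

lemma minRegEnergy_le_energy (s : ℝ) (hμ : IsRegComb E μ) : minRegEnergy s E ≤ energy s μ := by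
  rw [minRegEnergy, if_pos hμ.volume_pos]
  exact iInf₂_le μ hμ

lemma exists_isRegComb_energy_lt {s : ℝ} {r : ℝ≥0∞} (h : minRegEnergy s E < r) :
    ∃ μ, IsRegComb E μ ∧ energy s μ < r := by
  rw [minRegEnergy] at h
  split_ifs at h
  · simpa only [iInf_lt_iff, exists_prop] using h
  · exact absurd h not_top_lt

lemma IsRegComb.exists_le_smul_volume_restrict (hμ : IsRegComb E μ) :
    ∃ C : ℝ≥0∞, C ≠ ⊤ ∧ μ ≤ C • volume.restrict E := by
  obtain ⟨hprob, k, c, G, -, -, hGE, rfl⟩ := hμ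
  have hterm_le : ∀ i, c i * volume (G i) ≤ 1 := fun i => by
    rw [← measure_univ (μ := ∑ i, c i • volume.restrict (G i))]
    calc c i * volume (G i) = (c i • volume.restrict (G i)) univ := by simp
      _ ≤ _ := Finset.single_le_sum (f := fun i => c i • volume.restrict (G i))
          (fun _ _ => Measure.zero_le _) (Finset.mem_univ i) univ
  -- a coefficient can only be infinite on a null set, where its term vanishes
  set c' : Fin k → ℝ≥0∞ := fun i => if volume (G i) = 0 then 0 else c i
  refine ⟨∑ i, c' i, ENNReal.sum_ne_top.mpr fun i _ => ?_, ?_⟩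
  · by_cases hG : volume (G i) = 0
    · simp [c', hG]
    · simp only [c', if_neg hG]
      exact fun hc => by simpa [hc, hG] using hterm_le i
  · rw [Finset.sum_smul]
    refine Finset.sum_le_sum fun i _ => ?_
    by_cases hG : volume (G i) = 0
    · rw [Measure.restrict_eq_zero.mpr hG, smul_zero]
      exact Measure.zero_le _
    · simp only [c', if_neg hG]
      gcongr
      exact hGE i

lemma IsRegComb.inv_smul_restrict (hμ : IsRegComb E μ) (hF : MeasurableSet F) (h0 : μ F ≠ 0) :
    IsRegComb F ((μ F)⁻¹ • μ.restrict F) := by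
  obtain ⟨hprob, k, c, G, hc, hG, -, hμ_eq⟩ := hμ
  refine ⟨⟨?_⟩, k, fun i => (μ F)⁻¹ * c i, fun i => F ∩ G i,
    fun i => ENNReal.mul_pos (ENNReal.inv_ne_zero.mpr (measure_ne_top _ F)) (hc i).ne',
    fun i => hF.inter (hG i), fun i => inter_subset_left, ?_⟩
  · rw [Measure.smul_apply, Measure.restrict_apply_univ, smul_eq_mul,
      ENNReal.inv_mul_cancel h0 (measure_ne_top _ F)]
  · have hrestrict : μ.restrict F = ∑ i, c i • volume.restrict (F ∩ G i) := by
      rw [hμ_eq, ← Measure.restrictₗ_apply, map_sum]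
      simp only [Measure.restrictₗ_apply, Measure.restrict_smul, Measure.restrict_restrict hF]
    simp only [hrestrict, Finset.smul_sum, smul_smul]

theorem stmt9_general (d : ℕ) (s : ℝ)
    (E : Set (EuclideanSpace ℝ (Fin d)))
    (ε : ℝ≥0∞) (hε : 0 < ε) :
    ∃ δ : ℝ≥0∞, 0 < δ ∧ ∀ F : Set (EuclideanSpace ℝ (Fin d)), MeasurableSet F →
      volume (E \ F) < δ → minRegEnergy s F ≤ minRegEnergy s E + ε := by
  rcases eq_or_ne (minRegEnergy s E) ⊤ with hΓ | hΓ
  · exact ⟨1, one_pos, fun F _ _ => by simp [hΓ]⟩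
  obtain ⟨μ, hμ, hμE⟩ := exists_isRegComb_energy_lt (ENNReal.lt_add_right hΓ hε.ne')
  obtain ⟨θ, ⟨hθ0, hθ1⟩, hθ⟩ := ENNReal.exists_mem_Ioo_inv_mul_inv_mul_lt hμE
  obtain ⟨C, hC, hμC⟩ := hμ.exists_le_smul_volume_restrict
  have : IsProbabilityMeasure μ := hμ.1
  refine ⟨(1 - θ) / C, ENNReal.div_pos (tsub_pos_of_lt hθ1).ne' hC, fun F hF hEF => ?_⟩
  have hθF : θ ≤ μ F :=
    calc θ = 1 - (1 - θ) := (ENNReal.sub_sub_cancel ENNReal.one_ne_top hθ1.le).symm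
      _ ≤ 1 - C * volume.restrict E Fᶜ := by
        rw [Measure.restrict_apply hF.compl, ← sdiff_eq_compl_inter]
        gcongr
        exact (mul_le_mul_right hEF.le C).trans ENNReal.mul_div_le
      _ ≤ μ F := one_sub_mul_measure_compl_le hμC hF
  have hμF : μ F ≠ 0 := (hθ0.trans_le hθF).ne'
  calc minRegEnergy s F ≤ energy s ((μ F)⁻¹ • μ.restrict F) :=
        minRegEnergy_le_energy s (hμ.inv_smul_restrict hF hμF)
    _ ≤ (μ F)⁻¹ * (μ F)⁻¹ * energy s μ :=
        energy_smul_restrict_le s (ENNReal.inv_ne_top.mpr hμF) μ F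
    _ ≤ θ⁻¹ * θ⁻¹ * energy s μ := by gcongr
    _ ≤ minRegEnergy s E + ε := hθ.le

/-- For a Borel set `E ⊆ ℝ^d` with `L(E) > 0` and `0 < s < d`: for every `ε > 0`
there is `δ > 0` such that `Γ_s(F) ≤ Γ_s(E) + ε` for all Borel `F` with
`L(E \ F) < δ`. -/
theorem stmt9 (d : ℕ) (s : ℝ) (hs : 0 < s) (hsd : s < d)
    (E : Set (EuclideanSpace ℝ (Fin d))) (hE : MeasurableSet E) (hpos : 0 < volume E)
    (ε : ℝ≥0∞) (hε : 0 < ε) :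
    ∃ δ : ℝ≥0∞, 0 < δ ∧ ∀ F : Set (EuclideanSpace ℝ (Fin d)), MeasurableSet F →
      volume (E \ F) < δ → minRegEnergy s F ≤ minRegEnergy s E + ε :=
  stmt9_general d s E ε hε
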